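/- arXiv:2602.23558 — 5 statements merged into one kernel-verified Lean document; each statement's English description precedes it below -/
import Mathlib

section
/- Let (X, d_X) and (Y, d_Y) be path metric spaces, and let g : X → Y be a homeomorphism which is a local isometry, i.e., every point x ∈ X has a neighborhood U such that d_Y(g(u₁), g(u₂)) = d_X(u₁, u₂) for all u₁, u₂ ∈ U. Then g is an isometry: d_Y(g(x), g(x')) = d_X(x, x') for all x, x' ∈ X. -/
noncomputable section

/-- The intrinsic path "distance" between two points of a metric space: the
infimum, in `[0,∞]`, of the lengths (total variations) of continuous paths
joining them. -/
def pathEDist {X : Type*} [MetricSpace X] (x y : X) : ENNReal :=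
  ⨅ γ : {γ : ℝ → X // ContinuousOn γ (Set.Icc 0 1) ∧ γ 0 = x ∧ γ 1 = y},
    eVariationOn γ.1 (Set.Icc 0 1)

/-- A metric space is a path metric space if the distance between any two
points equals the infimum of the lengths of continuous paths joining them. -/
def IsPathMetricSpace (X : Type*) [MetricSpace X] : Prop :=
  ∀ x y : X, ENNReal.ofReal (dist x y) = pathEDist x y

/-- If `g` preserves distances among values of `f` on `s`, the variations agree. -/
lemma eVariationOn_comp_eq_of_edist_eq {α X Y : Type*} [LinearOrder α]
    [PseudoEMetricSpace X] [PseudoEMetricSpace Y]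
    {f : α → X} {g : X → Y} {s : Set α}
    (h : ∀ a ∈ s, ∀ b ∈ s, edist (g (f a)) (g (f b)) = edist (f a) (f b)) :
    eVariationOn (g ∘ f) s = eVariationOn f s := by
  rw [eVariationOn, eVariationOn]
  refine iSup_congr fun p => Finset.sum_congr rfl fun i _ => ?_
  exact h _ (p.2.2.2 _) _ (p.2.2.2 _)

/-- Key lemma: a local isometry preserves the length of paths. -/
lemma eVariationOn_comp_eq_of_locIso {X Y : Type*} [MetricSpace X] [MetricSpace Y] {g : X → Y}
    (hloc : ∀ x : X, ∃ U ∈ nhds x, ∀ u₁ ∈ U, ∀ u₂ ∈ U,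
      dist (g u₁) (g u₂) = dist u₁ u₂)
    {γ : ℝ → X} (hγ : ContinuousOn γ (Set.Icc 0 1)) :
    eVariationOn (g ∘ γ) (Set.Icc 0 1) = eVariationOn γ (Set.Icc 0 1) := by
  have main : ∀ t ∈ Set.Icc (0:ℝ) 1, ∃ V : Set ℝ, IsOpen V ∧ t ∈ V ∧
      ∀ a ∈ V ∩ Set.Icc (0:ℝ) 1, ∀ b ∈ V ∩ Set.Icc (0:ℝ) 1,
        edist (g (γ a)) (g (γ b)) = edist (γ a) (γ b) := by
    intro t ht
    obtain ⟨U, hU, hUiso⟩ := hloc (γ t)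
    have hmem : γ ⁻¹' U ∈ nhdsWithin t (Set.Icc 0 1) := hγ t ht hU
    rw [mem_nhdsWithin] at hmem
    obtain ⟨V, hVopen, htV, hV⟩ := hmem
    refine ⟨V, hVopen, htV, fun a ha b hb => ?_⟩
    rw [edist_dist, edist_dist, hUiso _ (hV ⟨ha.1, ha.2⟩) _ (hV ⟨hb.1, hb.2⟩)]
  choose! V hVopen htV hViso using main
  obtain ⟨δ, δpos, hδ⟩ := lebesgue_number_lemma_of_metric (s := Set.Icc (0:ℝ) 1)
    (c := fun t : Set.Icc (0:ℝ) 1 => V t.1) isCompact_Icc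
    (fun t => hVopen t.1 t.2)
    (fun x hx => Set.mem_iUnion.2 ⟨⟨x, hx⟩, htV x hx⟩)
  obtain ⟨n, hn⟩ := exists_nat_one_div_lt δpos
  set N : ℝ := (n : ℝ) + 1 with hN
  have hNpos : (0:ℝ) < N := by positivity
  -- variation on each small piece agrees
  have piece : ∀ k : ℕ, (k : ℝ) < N →
      eVariationOn (g ∘ γ) (Set.Icc 0 1 ∩ Set.Icc ((k:ℝ)/N) (((k:ℝ)+1)/N))
        = eVariationOn γ (Set.Icc 0 1 ∩ Set.Icc ((k:ℝ)/N) (((k:ℝ)+1)/N)) := by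
    intro k hk
    have hk0 : (0:ℝ) ≤ (k:ℝ)/N := by positivity
    have hk1 : (k:ℝ)/N ≤ 1 := by
      rw [div_le_one hNpos]; exact hk.le
    obtain ⟨t, ht⟩ := hδ ((k:ℝ)/N) ⟨hk0, hk1⟩
    refine eVariationOn_comp_eq_of_edist_eq fun a ha b hb => ?_
    have hball : ∀ c : ℝ, c ∈ Set.Icc 0 1 ∩ Set.Icc ((k:ℝ)/N) (((k:ℝ)+1)/N) →
        c ∈ V t.1 ∩ Set.Icc (0:ℝ) 1 := by
      intro c hc
      refine ⟨ht ?_, hc.1⟩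
      rw [Metric.mem_ball, Real.dist_eq, abs_sub_lt_iff]
      constructor
      · have : c ≤ ((k:ℝ)+1)/N := hc.2.2
        have h1N : ((k:ℝ)+1)/N - (k:ℝ)/N = 1/N := by ring
        linarith [hc.2.2, hn, h1N]
      · have : (k:ℝ)/N ≤ c := hc.2.1
        linarith [δpos]
    exact hViso t.1 t.2 a (hball a ha) b (hball b hb)
  -- glue pieces by induction
  have all : ∀ k : ℕ, (k : ℝ) ≤ N →
      eVariationOn (g ∘ γ) (Set.Icc 0 1 ∩ Set.Icc 0 ((k:ℝ)/N))
        = eVariationOn γ (Set.Icc 0 1 ∩ Set.Icc 0 ((k:ℝ)/N)) := by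
    intro k
    induction k with
    | zero =>
      intro _
      have h0 : ((0:ℕ):ℝ)/N = 0 := by norm_num
      rw [h0]
      have hsub : (Set.Icc (0:ℝ) 1 ∩ Set.Icc 0 0).Subsingleton := by
        rw [Set.Icc_self]
        exact Set.subsingleton_singleton.anti Set.inter_subset_right
      rw [eVariationOn.subsingleton _ hsub, eVariationOn.subsingleton _ hsub]
    | succ k ih =>
      intro hk
      have hkN : (k : ℝ) < N := by push_cast at hk ⊢; linarith
      have hab : (0:ℝ) ≤ (k:ℝ)/N := by positivity
      have hbc : (k:ℝ)/N ≤ ((k:ℝ)+1)/N := by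
        gcongr
        linarith
      have hb : (k:ℝ)/N ∈ Set.Icc (0:ℝ) 1 := ⟨hab, by rw [div_le_one hNpos]; exact hkN.le⟩
      have h1 := eVariationOn.Icc_add_Icc (g ∘ γ) (s := Set.Icc (0:ℝ) 1) hab hbc hb
      have h2 := eVariationOn.Icc_add_Icc γ (s := Set.Icc (0:ℝ) 1) hab hbc hb
      push_cast
      rw [← h1, ← h2, ih hkN.le, piece k hkN]
  have hfin := all (n + 1) (by push_cast [hN]; linarith)
  have hNN : ((n + 1 : ℕ) : ℝ)/N = 1 := by push_cast [hN]; field_simp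
  rw [hNN] at hfin
  simpa [Set.inter_eq_left.2 (Set.Icc_subset_Icc le_rfl le_rfl)] using hfin

/-- a homeomorphism between path metric spaces which is a local
isometry is an isometry. -/
theorem statement_0 {X Y : Type*} [MetricSpace X] [MetricSpace Y]
    (hX : IsPathMetricSpace X) (hY : IsPathMetricSpace Y)
    (g : X ≃ₜ Y)
    (hloc : ∀ x : X, ∃ U ∈ nhds x, ∀ u₁ ∈ U, ∀ u₂ ∈ U,
      dist (g u₁) (g u₂) = dist u₁ u₂) :
    ∀ x x' : X, dist (g x) (g x') = dist x x' := by
  have hpath : ∀ x x' : X, pathEDist (g x) (g x') = pathEDist x x' := by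
    intro x x'
    apply le_antisymm
    · refine le_iInf fun γ => ?_
      refine iInf_le_of_le ⟨g ∘ γ.1, g.continuous.comp_continuousOn γ.2.1,
        by simp [Function.comp, γ.2.2.1], by simp [Function.comp, γ.2.2.2]⟩ ?_
      exact le_of_eq (eVariationOn_comp_eq_of_locIso hloc γ.2.1)
    · refine le_iInf fun σ => ?_
      refine iInf_le_of_le ⟨g.symm ∘ σ.1, g.symm.continuous.comp_continuousOn σ.2.1,
        by simp [Function.comp, σ.2.2.1], by simp [Function.comp, σ.2.2.2]⟩ ?_
      have hk := eVariationOn_comp_eq_of_locIso hloc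
        (γ := g.symm ∘ σ.1) (g.symm.continuous.comp_continuousOn σ.2.1)
      have heq : g ∘ (g.symm ∘ σ.1) = σ.1 := funext fun t => g.apply_symm_apply _
      rw [heq] at hk
      exact le_of_eq hk.symm
  intro x x'
  have h := hY (g x) (g x')
  rw [hpath x x', ← hX x x'] at h
  exact (ENNReal.ofReal_eq_ofReal_iff dist_nonneg dist_nonneg).1 h
end
end

section
/- Let x, y, u, v ∈ ℝ^{n+1} satisfy ⟨x, x⟩ = ⟨y, y⟩, ⟨u, u⟩ = ⟨v, v⟩, ⟨x+y, e⟩ ≠ 0 and ⟨u+v, e⟩ ≠ 0, and set x̂ = P₁(x,y), ŷ = P₂(x,y), û = P₁(u,v), v̂ = P₂(u,v). Then ‖x̂ − û‖ = ‖ŷ − v̂‖ if and only if ⟨x, u⟩ = ⟨y, v⟩, where ‖·‖ is the Euclidean norm on ℝⁿ. -/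
open scoped BigOperators

noncomputable section

/-- The Minkowski product on `ℝ^{n+1}`: `⟨x,y⟩ = -x₀y₀ + ∑_{i=1}^n xᵢyᵢ`. -/
def mink {n : ℕ} (x y : Fin (n + 1) → ℝ) : ℝ :=
  -(x 0 * y 0) + ∑ i : Fin n, x i.succ * y i.succ

/-- The vector `e = (1, 0, …, 0)` in `ℝ^{n+1}`. -/
def eVec (n : ℕ) : Fin (n + 1) → ℝ := fun i => if i = 0 then 1 else 0

/-- Projection `𝒫 : ℝ^{n+1} → ℝⁿ`, forgetting the 0-th coordinate, landing in
Euclidean space (with the Euclidean norm). -/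
def proj {n : ℕ} (x : Fin (n + 1) → ℝ) : EuclideanSpace ℝ (Fin n) :=
  WithLp.toLp 2 (fun i : Fin n => x i.succ)

/-- The hyperboloid model `Hⁿ = {x : ⟨x,x⟩ = -1, x₀ > 0}`. -/
def Hyp (n : ℕ) : Set (Fin (n + 1) → ℝ) := {x | mink x x = -1 ∧ 0 < x 0}

/-- First component of the Pogorelov map: `P₁(x,y) = 2𝒫(x)/(-⟨x+y,e⟩)`. -/
def P1 {n : ℕ} (x y : Fin (n + 1) → ℝ) : EuclideanSpace ℝ (Fin n) :=
  (2 / (-(mink (x + y) (eVec n)))) • proj x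

/-- Second component of the Pogorelov map: `P₂(x,y) = 2𝒫(y)/(-⟨x+y,e⟩)`. -/
def P2 {n : ℕ} (x y : Fin (n + 1) → ℝ) : EuclideanSpace ℝ (Fin n) :=
  (2 / (-(mink (x + y) (eVec n)))) • proj y

/-- The function `f(a,b) = (2+‖a‖+‖b‖)(2-‖a‖+‖b‖)(2+‖a‖-‖b‖)(2-‖a‖-‖b‖)`. -/
def fQ {n : ℕ} (a b : EuclideanSpace ℝ (Fin n)) : ℝ :=
  (2 + ‖a‖ + ‖b‖) * (2 - ‖a‖ + ‖b‖) * (2 + ‖a‖ - ‖b‖) * (2 - ‖a‖ - ‖b‖)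

/-- The vector in `ℝ^{n+1}` with 0-th coordinate `t` and `𝒫`-projection `v`. -/
def liftVec {n : ℕ} (t : ℝ) (v : EuclideanSpace ℝ (Fin n)) : Fin (n + 1) → ℝ :=
  Fin.cons t (fun i => v i)

/-- First component of `Ψ(a,b)`, namely `(√(‖x̂‖²+1), x̂)` with `x̂ = 4a/√f(a,b)`. -/
def Psi1 {n : ℕ} (a b : EuclideanSpace ℝ (Fin n)) : Fin (n + 1) → ℝ :=
  liftVec (Real.sqrt (‖(4 / Real.sqrt (fQ a b)) • a‖ ^ 2 + 1)) ((4 / Real.sqrt (fQ a b)) • a)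

/-- Second component of `Ψ(a,b)`, namely `(√(‖ŷ‖²+1), ŷ)` with `ŷ = 4b/√f(a,b)`. -/
def Psi2 {n : ℕ} (a b : EuclideanSpace ℝ (Fin n)) : Fin (n + 1) → ℝ :=
  liftVec (Real.sqrt (‖(4 / Real.sqrt (fQ a b)) • b‖ ^ 2 + 1)) ((4 / Real.sqrt (fQ a b)) • b)

/- The Euclidean part of the Minkowski product is `⟨𝒫a, 𝒫b⟩ = ⟨a, b⟩ + a₀b₀`; since
`⟨x, x⟩ = ⟨y, y⟩`, the differences `‖𝒫x‖² - ‖𝒫y‖²` and `⟨𝒫x, 𝒫u⟩ - ⟨𝒫y, 𝒫v⟩` are expressed through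
time coordinates and `⟨x, u⟩ - ⟨y, v⟩` alone. Expanding, the time-coordinate terms cancel and
`‖x̂ - û‖² - ‖ŷ - v̂‖² = 8 (⟨y, v⟩ - ⟨x, u⟩) / ((x₀ + y₀)(u₀ + v₀))`. -/

open RealInnerProductSpace

lemma mink_eVec {n : ℕ} (z : Fin (n + 1) → ℝ) : mink z (eVec n) = -z 0 := by
  simp [mink, eVec, Fin.succ_ne_zero]

lemma mink_comm {n : ℕ} (a b : Fin (n + 1) → ℝ) : mink a b = mink b a := by
  simp only [mink, mul_comm (a _)]

lemma inner_proj {n : ℕ} (a b : Fin (n + 1) → ℝ) : ⟪proj a, proj b⟫ = mink a b + a 0 * b 0 := by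
  simp only [PiLp.inner_apply, RCLike.inner_apply, proj, mink, conj_trivial, mul_comm (b _)]
  ring

lemma P1_eq_smul {n : ℕ} (x y : Fin (n + 1) → ℝ) : P1 x y = (2 / (x 0 + y 0)) • proj x := by
  simp [P1, mink_eVec]

lemma P2_eq_smul {n : ℕ} (x y : Fin (n + 1) → ℝ) : P2 x y = (2 / (x 0 + y 0)) • proj y := by
  simp [P2, mink_eVec]

lemma norm_P1_sub_sq_sub_norm_P2_sub_sq {n : ℕ} {x y u v : Fin (n + 1) → ℝ}
    (hxy : mink x x = mink y y) (huv : mink u u = mink v v)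
    (hxy0 : x 0 + y 0 ≠ 0) (huv0 : u 0 + v 0 ≠ 0) :
    ‖P1 x y - P1 u v‖ ^ 2 - ‖P2 x y - P2 u v‖ ^ 2
      = 8 / ((x 0 + y 0) * (u 0 + v 0)) * (mink y v - mink x u) := by
  rw [P1_eq_smul, P1_eq_smul, P2_eq_smul, P2_eq_smul, ← real_inner_self_eq_norm_sq,
    ← real_inner_self_eq_norm_sq]
  simp only [inner_sub_left, inner_sub_right, real_inner_smul_left, real_inner_smul_right,
    inner_proj]
  rw [hxy, huv, mink_comm u x, mink_comm v y]
  field_simp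
  ring

theorem statement_1_general {n : ℕ} (x y u v : Fin (n + 1) → ℝ)
    (hxy : mink x x = mink y y) (huv : mink u u = mink v v)
    (hxy0 : mink (x + y) (eVec n) ≠ 0) (huv0 : mink (u + v) (eVec n) ≠ 0) :
    ‖P1 x y - P1 u v‖ = ‖P2 x y - P2 u v‖ ↔ mink x u = mink y v := by
  have hS : x 0 + y 0 ≠ 0 := by rwa [mink_eVec, Pi.add_apply, neg_ne_zero] at hxy0
  have hT : u 0 + v 0 ≠ 0 := by rwa [mink_eVec, Pi.add_apply, neg_ne_zero] at huv0
  rw [← sq_eq_sq₀ (norm_nonneg _) (norm_nonneg _), ← sub_eq_zero,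
    norm_P1_sub_sq_sub_norm_P2_sub_sq hxy huv hS hT, mul_eq_zero,
    or_iff_right (by positivity), sub_eq_zero, eq_comm]

/-- `‖x̂ − û‖ = ‖ŷ − v̂‖` iff `⟨x,u⟩ = ⟨y,v⟩`. -/
theorem statement_1 {n : ℕ} (hn : 1 ≤ n) (x y u v : Fin (n + 1) → ℝ)
    (hxy : mink x x = mink y y) (huv : mink u u = mink v v)
    (hxy0 : mink (x + y) (eVec n) ≠ 0) (huv0 : mink (u + v) (eVec n) ≠ 0) :
    ‖P1 x y - P1 u v‖ = ‖P2 x y - P2 u v‖ ↔ mink x u = mink y v :=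
  statement_1_general x y u v hxy huv hxy0 huv0
end
end

section
/- Let A : ℝ^{n+1} → ℝ^{n+1} be a linear equivalence preserving the Minkowski product (⟨Ax, Ay⟩ = ⟨x, y⟩ for all x, y) and mapping Hⁿ into Hⁿ, i.e., A represents an isometry of hyperbolic n-space in the hyperboloid model. Then there exists a unique surjective isometry B of ℝⁿ (with the Euclidean metric) such that P₂(x, A x) = B(P₁(x, A x)) for all x ∈ Hⁿ. Moreover, this same B satisfies P₁(x, A⁻¹ x) = B(P₂(x, A⁻¹ x)) for all x ∈ Hⁿ, i.e., P₂(x, A⁻¹x) = B⁻¹(P₁(x, A⁻¹x)). -/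
open scoped BigOperators

noncomputable section

/-!
Split `A` into blocks along `ℝe ⊕ ℝⁿ`: `α = (Ae)₀`, `v = 𝒫(Ae)`, `φ(u) = (A(0,u))₀`,
`L u = 𝒫(A(0,u))`. The denominator of `P₁(x, Ax)` and `P₂(x, Ax)` is `(1 + α) x₀ + φ(𝒫x)`, and a
direct computation gives `P₂(x, Ax) = R (P₁(x, Ax)) + 2v / (1 + α)` with `R = L - v φ / (1 + α)`.
Invariance of the Minkowski product yields `‖v‖² = α² - 1`, `⟨v, L u⟩ = α φ(u)` and
`⟨L u, L w⟩ = ⟨u, w⟩ + φ(u) φ(w)`, which make `R` orthogonal. The claim for `A⁻¹` is the same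
identity at `A⁻¹x`, since `P₁(x, y) = P₂(y, x)`. For uniqueness, the points `P₁(x, Ax)` include `0`
and a nonzero multiple of every vector, and surjective isometries of `ℝⁿ` are affine.
-/

open scoped RealInnerProductSpace

theorem IsometryEquiv.ext_of_map_zero_of_smul {E F : Type*} [NormedAddCommGroup E]
    [NormedSpace ℝ E] [NormedAddCommGroup F] [NormedSpace ℝ F] {f g : E ≃ᵢ F} (h0 : f 0 = g 0)
    (h : ∀ u : E, ∃ c : ℝ, c ≠ 0 ∧ f (c • u) = g (c • u)) : f = g := by
  -- Mazur–Ulam: surjective isometries of real normed spaces are affine.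
  have affine : ∀ (φ : E ≃ᵢ F) (c : ℝ) (u : E), φ (c • u) = c • (φ u - φ 0) + φ 0 := by
    intro φ c u
    simpa [AffineMap.lineMap_apply_module', IsometryEquiv.coeFn_toRealAffineIsometryEquiv]
      using φ.toRealAffineIsometryEquiv.toAffineEquiv.apply_lineMap 0 u c
  ext u
  obtain ⟨c, hc, hcu⟩ := h u
  rw [affine, affine g, h0] at hcu
  simpa [hc] using hcu

variable {n : ℕ}

lemma mink_eq_neg_mul_add_inner (x y : Fin (n + 1) → ℝ) :
    mink x y = -(x 0 * y 0) + ⟪proj x, proj y⟫ := by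
  simp [mink, PiLp.inner_apply, proj, mul_comm]

@[simp] lemma liftVec_apply_zero (t : ℝ) (u : EuclideanSpace ℝ (Fin n)) : liftVec t u 0 = t := rfl

@[simp] lemma proj_liftVec (t : ℝ) (u : EuclideanSpace ℝ (Fin n)) : proj (liftVec t u) = u := by
  ext i; simp [proj, liftVec]

@[simp] lemma eVec_apply_zero : eVec n 0 = 1 := by simp [eVec]

@[simp] lemma proj_eVec : proj (eVec n) = 0 := by
  ext i; simp [proj, eVec, Fin.succ_ne_zero]

lemma neg_mink_add_eVec (x y : Fin (n + 1) → ℝ) : -mink (x + y) (eVec n) = x 0 + y 0 := by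
  simp [mink_eq_neg_mul_add_inner]

lemma eq_smul_eVec_add_liftVec (x : Fin (n + 1) → ℝ) :
    x = x 0 • eVec n + liftVec 0 (proj x) := by
  funext i; refine Fin.cases ?_ ?_ i <;> simp [eVec, liftVec, proj, Fin.succ_ne_zero]

lemma P1_eq_P2_swap (x y : Fin (n + 1) → ℝ) : P1 x y = P2 y x := by
  simp only [P1, P2, add_comm x y]

def projₗ : (Fin (n + 1) → ℝ) →ₗ[ℝ] EuclideanSpace ℝ (Fin n) where
  toFun := proj
  map_add' x y := by ext i; simp [proj]
  map_smul' c x := by ext i; simp [proj]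

def liftVecₗ : EuclideanSpace ℝ (Fin n) →ₗ[ℝ] (Fin (n + 1) → ℝ) where
  toFun := liftVec 0
  map_add' u w := by funext i; refine Fin.cases ?_ ?_ i <;> simp [liftVec]
  map_smul' c u := by funext i; refine Fin.cases ?_ ?_ i <;> simp [liftVec]

@[simp] lemma liftVecₗ_apply (u : EuclideanSpace ℝ (Fin n)) : liftVecₗ u = liftVec 0 u := rfl

lemma eVec_mem_Hyp : eVec n ∈ Hyp n := by
  simp [Hyp, mink_eq_neg_mul_add_inner]

lemma liftVec_sqrt_mem_Hyp (u : EuclideanSpace ℝ (Fin n)) :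
    liftVec (√(‖u‖ ^ 2 + 1)) u ∈ Hyp n := by
  refine ⟨?_, by simp; positivity⟩
  rw [mink_eq_neg_mul_add_inner, real_inner_self_eq_norm_sq]
  simp [Real.mul_self_sqrt (by positivity : (0 : ℝ) ≤ ‖u‖ ^ 2 + 1)]

lemma neg_mem_Hyp_of_apply_zero_nonpos {x : Fin (n + 1) → ℝ} (hx : mink x x = -1) (h0 : x 0 ≤ 0) :
    -x ∈ Hyp n := by
  refine ⟨by simpa [mink] using hx, ?_⟩
  have hx0 : x 0 ≠ 0 := by
    intro h
    rw [mink_eq_neg_mul_add_inner, h, real_inner_self_eq_norm_sq] at hx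
    nlinarith [sq_nonneg ‖proj x‖]
  simpa using lt_of_le_of_ne h0 hx0

lemma LinearEquiv.symm_mem_Hyp (A : (Fin (n + 1) → ℝ) ≃ₗ[ℝ] (Fin (n + 1) → ℝ))
    (hA : ∀ x y, mink (A x) (A y) = mink x y) (hH : ∀ x ∈ Hyp n, A x ∈ Hyp n)
    {x : Fin (n + 1) → ℝ} (hx : x ∈ Hyp n) : A.symm x ∈ Hyp n := by
  have hmink : mink (A.symm x) (A.symm x) = -1 := by
    rw [← hA, A.apply_symm_apply]; exact hx.1
  refine ⟨hmink, not_le.mp fun hle => ?_⟩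
  have := (hH _ (neg_mem_Hyp_of_apply_zero_nonpos hmink hle)).2
  rw [map_neg, A.apply_symm_apply] at this
  linarith [hx.2, show (-x) 0 = -x 0 from rfl]

section BlockDecomposition

variable (A : (Fin (n + 1) → ℝ) →ₗ[ℝ] (Fin (n + 1) → ℝ))

def timeRow : EuclideanSpace ℝ (Fin n) →ₗ[ℝ] ℝ :=
  LinearMap.proj 0 ∘ₗ A ∘ₗ liftVecₗ

def spaceBlock : EuclideanSpace ℝ (Fin n) →ₗ[ℝ] EuclideanSpace ℝ (Fin n) :=
  projₗ ∘ₗ A ∘ₗ liftVecₗ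

lemma timeRow_apply (u : EuclideanSpace ℝ (Fin n)) : timeRow A u = A (liftVec 0 u) 0 := rfl

lemma spaceBlock_apply (u : EuclideanSpace ℝ (Fin n)) :
    spaceBlock A u = proj (A (liftVec 0 u)) := rfl

lemma apply_zero_eq_timeRow (x : Fin (n + 1) → ℝ) :
    A x 0 = A (eVec n) 0 * x 0 + timeRow A (proj x) := by
  simpa [timeRow, mul_comm] using congrArg (LinearMap.proj 0 ∘ₗ A) (eq_smul_eVec_add_liftVec x)

lemma proj_apply_eq_spaceBlock (x : Fin (n + 1) → ℝ) :
    proj (A x) = x 0 • proj (A (eVec n)) + spaceBlock A (proj x) := by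
  have h := congrArg (projₗ ∘ₗ A) (eq_smul_eVec_add_liftVec x)
  rwa [map_add, map_smul] at h

def rotationPart : EuclideanSpace ℝ (Fin n) →ₗ[ℝ] EuclideanSpace ℝ (Fin n) :=
  spaceBlock A - (1 + A (eVec n) 0)⁻¹ • (timeRow A).smulRight (proj (A (eVec n)))

lemma rotationPart_apply (u : EuclideanSpace ℝ (Fin n)) :
    rotationPart A u = spaceBlock A u - (timeRow A u / (1 + A (eVec n) 0)) • proj (A (eVec n)) := by
  simp [rotationPart, smul_smul, div_eq_inv_mul]

lemma P2_apply_eq_rotationPart_P1 {x : Fin (n + 1) → ℝ} (hx : x 0 + A x 0 ≠ 0)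
    (hα : 1 + A (eVec n) 0 ≠ 0) :
    P2 x (A x) = rotationPart A (P1 x (A x)) + (2 / (1 + A (eVec n) 0)) • proj (A (eVec n)) := by
  have hd : x 0 + A x 0 = (1 + A (eVec n) 0) * x 0 + timeRow A (proj x) := by
    rw [apply_zero_eq_timeRow A x]; ring
  simp only [P1, P2, neg_mink_add_eVec, map_smul, rotationPart_apply,
    proj_apply_eq_spaceBlock A x]
  rw [hd] at hx ⊢
  match_scalars <;> field_simp
  ring

variable {A} (hA : ∀ x y, mink (A x) (A y) = mink x y)
include hA

lemma inner_proj_eVec_self :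
    ⟪proj (A (eVec n)), proj (A (eVec n))⟫ = A (eVec n) 0 ^ 2 - 1 := by
  have h := hA (eVec n) (eVec n)
  simp only [mink_eq_neg_mul_add_inner, proj_eVec, eVec_apply_zero, inner_zero_left] at h
  linarith

lemma inner_proj_eVec_spaceBlock (u : EuclideanSpace ℝ (Fin n)) :
    ⟪proj (A (eVec n)), spaceBlock A u⟫ = A (eVec n) 0 * timeRow A u := by
  have h := hA (eVec n) (liftVec 0 u)
  simp only [mink_eq_neg_mul_add_inner, proj_eVec, eVec_apply_zero, inner_zero_left,
    liftVec_apply_zero] at h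
  rw [spaceBlock_apply, timeRow_apply]
  linarith

lemma inner_spaceBlock (u w : EuclideanSpace ℝ (Fin n)) :
    ⟪spaceBlock A u, spaceBlock A w⟫ = ⟪u, w⟫ + timeRow A u * timeRow A w := by
  have h := hA (liftVec 0 u) (liftVec 0 w)
  simp only [mink_eq_neg_mul_add_inner, liftVec_apply_zero, proj_liftVec] at h
  rw [spaceBlock_apply, spaceBlock_apply, timeRow_apply, timeRow_apply]
  linarith

lemma inner_rotationPart (hα : 1 + A (eVec n) 0 ≠ 0) (u w : EuclideanSpace ℝ (Fin n)) :
    ⟪rotationPart A u, rotationPart A w⟫ = ⟪u, w⟫ := by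
  simp only [rotationPart_apply, inner_sub_left, inner_sub_right, real_inner_smul_left,
    real_inner_smul_right, inner_spaceBlock hA, real_inner_comm _ (spaceBlock A u),
    inner_proj_eVec_spaceBlock hA, inner_proj_eVec_self hA]
  field_simp
  ring

end BlockDecomposition

def pogorelovMotion {A : (Fin (n + 1) → ℝ) →ₗ[ℝ] (Fin (n + 1) → ℝ)}
    (hA : ∀ x y, mink (A x) (A y) = mink x y) (hα : 1 + A (eVec n) 0 ≠ 0) :
    EuclideanSpace ℝ (Fin n) ≃ᵢ EuclideanSpace ℝ (Fin n) :=
  (((rotationPart A).isometryOfInner (inner_rotationPart hA hα)).toLinearIsometryEquiv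
    rfl).toIsometryEquiv.trans
    (IsometryEquiv.addRight ((2 / (1 + A (eVec n) 0)) • proj (A (eVec n))))

lemma exists_smul_eq_P1 {f : (Fin (n + 1) → ℝ) → (Fin (n + 1) → ℝ)}
    (hf : ∀ x ∈ Hyp n, f x ∈ Hyp n) (u : EuclideanSpace ℝ (Fin n)) :
    ∃ x ∈ Hyp n, ∃ c : ℝ, c ≠ 0 ∧ P1 x (f x) = c • u := by
  set x := liftVec (√(‖u‖ ^ 2 + 1)) u
  have hx : x ∈ Hyp n := liftVec_sqrt_mem_Hyp u
  refine ⟨x, hx, 2 / (x 0 + f x 0), by have := (hf x hx).2; have := hx.2; positivity, ?_⟩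
  simp [x, P1, neg_mink_add_eVec]

theorem statement_8_general {n : ℕ}
    (A : (Fin (n + 1) → ℝ) ≃ₗ[ℝ] (Fin (n + 1) → ℝ))
    (hA : ∀ x y, mink (A x) (A y) = mink x y)
    (hH : ∀ x ∈ Hyp n, A x ∈ Hyp n) :
    ∃ B : EuclideanSpace ℝ (Fin n) ≃ᵢ EuclideanSpace ℝ (Fin n),
      (∀ x ∈ Hyp n, P2 x (A x) = B (P1 x (A x))) ∧
      (∀ x ∈ Hyp n, P1 x (A.symm x) = B (P2 x (A.symm x))) ∧
      ∀ B' : EuclideanSpace ℝ (Fin n) ≃ᵢ EuclideanSpace ℝ (Fin n),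
        (∀ x ∈ Hyp n, P2 x (A x) = B' (P1 x (A x))) → B' = B := by
  have hα : 1 + A (eVec n) 0 ≠ 0 := by linarith [(hH _ eVec_mem_Hyp).2]
  set B := pogorelovMotion (A := A.toLinearMap) hA hα
  have hB : ∀ x ∈ Hyp n, P2 x (A x) = B (P1 x (A x)) := fun x hx =>
    have hx0 : x 0 + A x 0 ≠ 0 := by linarith [hx.2, (hH x hx).2]
    P2_apply_eq_rotationPart_P1 A.toLinearMap hx0 hα
  refine ⟨B, hB, fun x hx => ?_, fun B' hB' => ?_⟩
  · have := hB _ (A.symm_mem_Hyp hA hH hx)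
    rw [A.apply_symm_apply] at this
    rw [P1_eq_P2_swap, this, P1_eq_P2_swap]
  · refine IsometryEquiv.ext_of_map_zero_of_smul ?_ fun u => ?_
    · have hP1 : P1 (eVec n) (A (eVec n)) = 0 := by simp [P1]
      rw [← hP1, ← hB, ← hB'] <;> exact eVec_mem_Hyp
    · obtain ⟨x, hx, c, hc, hcu⟩ := exists_smul_eq_P1 hH u
      exact ⟨c, hc, by rw [← hcu, ← hB, ← hB'] <;> assumption⟩

/-- every hyperbolic isometry `A` (a Minkowski-product-preserving
linear equivalence mapping `Hⁿ` into `Hⁿ`) determines a unique rigid motion `B`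
of Euclidean `ℝⁿ` with `P₂(x, Ax) = B (P₁(x, Ax))` for all `x ∈ Hⁿ`; moreover
this same `B` satisfies `P₁(x, A⁻¹x) = B (P₂(x, A⁻¹x))` for all `x ∈ Hⁿ`. -/
theorem statement_8 {n : ℕ} (hn : 1 ≤ n)
    (A : (Fin (n + 1) → ℝ) ≃ₗ[ℝ] (Fin (n + 1) → ℝ))
    (hA : ∀ x y, mink (A x) (A y) = mink x y)
    (hH : ∀ x ∈ Hyp n, A x ∈ Hyp n) :
    ∃ B : EuclideanSpace ℝ (Fin n) ≃ᵢ EuclideanSpace ℝ (Fin n),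
      (∀ x ∈ Hyp n, P2 x (A x) = B (P1 x (A x))) ∧
      (∀ x ∈ Hyp n, P1 x (A.symm x) = B (P2 x (A.symm x))) ∧
      ∀ B' : EuclideanSpace ℝ (Fin n) ≃ᵢ EuclideanSpace ℝ (Fin n),
        (∀ x ∈ Hyp n, P2 x (A x) = B' (P1 x (A x))) → B' = B :=
  statement_8_general A hA hH
end
end

section
/- Let A be a nonempty closed subset of the unit sphere S² ⊆ ℝ³ such that A contains no pair of antipodal points (for every x ∈ A, −x ∉ A) and the cone C(A) = {t·a : t ≥ 0, a ∈ A} is a convex subset of ℝ³. Then there exists α ∈ A such that ⟨α, x⟩ > 0 for every x ∈ A; that is, A is contained in the open hemisphere of S² centered at the point α of A. -/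
/-!
The cone over `A` is convex and, as `A` has no antipodal pair, contains no line; hence `0` is not
in the convex hull of `A`. That hull is compact (Carathéodory), so some `u` satisfies `⟪u, a⟫ > 0`
on `A`. Let `α ∈ A` maximize `⟪u, ·⟫`. If `⟪α, x⟫ ≤ 0` for some `x ∈ A`, put `p = ⟪u, α⟫`,
`q = ⟪u, x⟫`: the cone point `y = p • α + q • x` has `⟪u, y⟫ = p² + q²` and `‖y‖² ≤ p² + q²`,
so `⟪u, y⟫ ≥ √(p² + q²) ‖y‖ > p ‖y‖` and `y / ‖y‖ ∈ A` beats `α`.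
-/

open scoped RealInnerProductSpace

noncomputable section

local notation "E" => EuclideanSpace ℝ (Fin 3)

open Module Set

section Caratheodory

variable {𝕜 V : Type*} [Field 𝕜] [LinearOrder 𝕜] [IsStrictOrderedRing 𝕜]
  [AddCommGroup V] [Module 𝕜 V] [FiniteDimensional 𝕜 V]

theorem convexHull_eq_biUnion_image_stdSimplex (s : Set V) :
    convexHull 𝕜 s = ⋃ k ∈ Iic (finrank 𝕜 V + 1),
      (fun p : (Fin k → 𝕜) × (Fin k → V) => ∑ i, p.1 i • p.2 i) ''
        (stdSimplex 𝕜 (Fin k) ×ˢ univ.pi fun _ => s) := by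
  refine Subset.antisymm (fun x hx => ?_) ?_
  · obtain ⟨ι, _, z, w, hzs, hind, hw, hw₁, rfl⟩ := eq_pos_convex_span_of_mem_convexHull hx
    have hcard : Fintype.card ι ≤ finrank 𝕜 V + 1 :=
      hind.card_le_finrank_succ.trans (by gcongr; exact Submodule.finrank_le _)
    let σ := (Fintype.equivFin ι).symm
    refine mem_biUnion hcard
      ⟨(w ∘ σ, z ∘ σ), ⟨⟨fun _ => (hw _).le, ?_⟩, fun _ _ => hzs ⟨_, rfl⟩⟩, ?_⟩
    · simpa only [Function.comp_apply, σ.sum_comp] using hw₁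
    · exact σ.sum_comp fun i => w i • z i
  · simp only [iUnion_subset_iff]
    rintro k - _ ⟨⟨w, z⟩, ⟨hw, hz⟩, rfl⟩
    exact mem_convexHull_of_exists_fintype w z hw.1 hw.2 (fun i => hz i (mem_univ i)) rfl

end Caratheodory

theorem IsCompact.convexHull {V : Type*} [NormedAddCommGroup V] [NormedSpace ℝ V]
    [FiniteDimensional ℝ V] {s : Set V} (hs : IsCompact s) : IsCompact (convexHull ℝ s) := by
  rw [convexHull_eq_biUnion_image_stdSimplex]
  refine (finite_Iic _).isCompact_biUnion fun k _ => ?_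
  exact ((isCompact_stdSimplex ℝ (Fin k)).prod (isCompact_univ_pi fun _ => hs)).image
    (by fun_prop)

theorem exists_forall_inner_pos_of_zero_notMem_convexHull {V : Type*} [NormedAddCommGroup V]
    [InnerProductSpace ℝ V] [FiniteDimensional ℝ V] {s : Set V} (hs : IsCompact s)
    (h₀ : (0 : V) ∉ convexHull ℝ s) : ∃ u : V, ∀ x ∈ s, 0 < ⟪u, x⟫ := by
  obtain ⟨f, c, hf₀, hf⟩ :=
    geometric_hahn_banach_point_closed (convex_convexHull ℝ s) hs.convexHull.isClosed h₀
  refine ⟨(InnerProductSpace.toDual ℝ V).symm f, fun x hx => ?_⟩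
  rw [map_zero] at hf₀
  rw [InnerProductSpace.toDual_symm_apply]
  exact hf₀.trans (hf x (subset_convexHull ℝ s hx))

def coneOver {V : Type*} [AddCommGroup V] [Module ℝ V] (A : Set V) : Set V :=
  {y | ∃ t : ℝ, 0 ≤ t ∧ ∃ a ∈ A, y = t • a}

section Module

variable {V : Type*} [AddCommGroup V] [Module ℝ V] {A : Set V} {x y : V}

theorem subset_coneOver : A ⊆ coneOver A :=
  fun a ha => ⟨1, zero_le_one, a, ha, (one_smul ℝ a).symm⟩

theorem smul_mem_coneOver {c : ℝ} (hc : 0 ≤ c) (hy : y ∈ coneOver A) : c • y ∈ coneOver A := by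
  obtain ⟨t, ht, a, ha, rfl⟩ := hy
  exact ⟨c * t, mul_nonneg hc ht, a, ha, smul_smul c t a⟩

theorem add_mem_coneOver (hconv : Convex ℝ (coneOver A)) (hx : x ∈ coneOver A)
    (hy : y ∈ coneOver A) : x + y ∈ coneOver A := by
  have hmid := hconv hx hy (by norm_num : (0 : ℝ) ≤ 1 / 2) (by norm_num : (0 : ℝ) ≤ 1 / 2)
    (by norm_num)
  convert smul_mem_coneOver (by norm_num : (0 : ℝ) ≤ 2) hmid using 1
  rw [smul_add, smul_smul, smul_smul]
  norm_num

theorem sum_mem_coneOver (hconv : Convex ℝ (coneOver A)) (hA : A.Nonempty) {ι : Type*}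
    (t : Finset ι) {f : ι → V} (hf : ∀ i ∈ t, f i ∈ coneOver A) : ∑ i ∈ t, f i ∈ coneOver A := by
  obtain ⟨a, ha⟩ := hA
  refine Finset.sum_induction f (· ∈ coneOver A) (fun _ _ => add_mem_coneOver hconv) ?_ hf
  exact ⟨0, le_rfl, a, ha, (zero_smul ℝ a).symm⟩

end Module

section Sphere

variable {V : Type*} [NormedAddCommGroup V] [InnerProductSpace ℝ V] {A : Set V} {y : V}

theorem mem_of_mem_coneOver_of_norm_eq_one (hA : A ⊆ Metric.sphere 0 1) (hy : y ∈ coneOver A)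
    (hy₁ : ‖y‖ = 1) : y ∈ A := by
  obtain ⟨t, ht, a, ha, rfl⟩ := hy
  rw [norm_smul, mem_sphere_zero_iff_norm.1 (hA ha), mul_one, Real.norm_of_nonneg ht] at hy₁
  rwa [hy₁, one_smul]

theorem inner_le_mul_norm_of_mem_coneOver (hA : A ⊆ Metric.sphere 0 1) {u : V} {p : ℝ}
    (hp : ∀ a ∈ A, ⟪u, a⟫ ≤ p) (hy : y ∈ coneOver A) : ⟪u, y⟫ ≤ p * ‖y‖ := by
  obtain ⟨t, ht, a, ha, rfl⟩ := hy
  rw [real_inner_smul_right, norm_smul, mem_sphere_zero_iff_norm.1 (hA ha), mul_one,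
    Real.norm_of_nonneg ht, mul_comm p]
  exact mul_le_mul_of_nonneg_left (hp a ha) ht

theorem zero_notMem_convexHull_of_convex_coneOver (hA : A ⊆ Metric.sphere 0 1)
    (hanti : ∀ x ∈ A, -x ∉ A) (hconv : Convex ℝ (coneOver A)) : (0 : V) ∉ convexHull ℝ A := by
  classical
  intro h₀
  obtain ⟨ι, _, z, w, hzA, -, hw, hw₁, hsum⟩ := eq_pos_convex_span_of_mem_convexHull h₀
  obtain ⟨i₀⟩ : Nonempty ι := by
    by_contra h
    simp [not_nonempty_iff.1 h] at hw₁
  have hz : z i₀ ∈ A := hzA ⟨i₀, rfl⟩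
  rw [← Finset.add_sum_erase _ _ (Finset.mem_univ i₀)] at hsum
  have hrest : -(w i₀ • z i₀) ∈ coneOver A := by
    rw [← eq_neg_of_add_eq_zero_right hsum]
    exact sum_mem_coneOver hconv ⟨_, hz⟩ _ fun i _ =>
      smul_mem_coneOver (hw i).le (subset_coneOver (hzA ⟨i, rfl⟩))
  have hneg : -z i₀ ∈ coneOver A := by
    simpa [smul_neg, smul_smul, inv_mul_cancel₀ (hw i₀).ne'] using
      smul_mem_coneOver (inv_nonneg.2 (hw i₀).le) hrest
  refine hanti _ hz (mem_of_mem_coneOver_of_norm_eq_one hA hneg ?_)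
  rw [norm_neg, ← mem_sphere_zero_iff_norm]
  exact hA hz

theorem inner_pos_of_isMaxOn (hA : A ⊆ Metric.sphere 0 1) (hconv : Convex ℝ (coneOver A))
    {u α x : V} (hu : ∀ a ∈ A, 0 < ⟪u, a⟫) (hα : α ∈ A) (hmax : IsMaxOn (⟪u, ·⟫) A α)
    (hx : x ∈ A) : 0 < ⟪α, x⟫ := by
  by_contra! hc
  set p := ⟪u, α⟫
  set q := ⟪u, x⟫
  have hp : 0 < p := hu α hα
  have hq : 0 < q := hu x hx
  set y := p • α + q • x
  have hy : y ∈ coneOver A := add_mem_coneOver hconv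
    (smul_mem_coneOver hp.le (subset_coneOver hα)) (smul_mem_coneOver hq.le (subset_coneOver hx))
  have h_inner : ⟪u, y⟫ = p ^ 2 + q ^ 2 := by
    rw [inner_add_right, real_inner_smul_right, real_inner_smul_right]
    ring
  have h_norm : ‖y‖ ^ 2 ≤ p ^ 2 + q ^ 2 := by
    rw [norm_add_sq_real, real_inner_smul_left, real_inner_smul_right, norm_smul, norm_smul,
      mem_sphere_zero_iff_norm.1 (hA hα), mem_sphere_zero_iff_norm.1 (hA hx),
      Real.norm_of_nonneg hp.le, Real.norm_of_nonneg hq.le]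
    nlinarith [mul_pos hp hq]
  have h_le : p ^ 2 + q ^ 2 ≤ p * ‖y‖ :=
    h_inner ▸ inner_le_mul_norm_of_mem_coneOver hA (fun a ha => hmax ha) hy
  nlinarith [norm_nonneg y, mul_pos hq hq]

end Sphere

/-- a nonempty closed subset of the unit sphere `S² ⊆ ℝ³` with no
antipodal pairs whose cone over the origin is convex is contained in an open
hemisphere centered at one of its own points. -/
theorem statement_13 (A : Set E) (hA : A ⊆ Metric.sphere (0 : E) 1)
    (hne : A.Nonempty) (hcl : IsClosed A)
    (hanti : ∀ x ∈ A, -x ∉ A)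
    (hcone : Convex ℝ {y : E | ∃ t : ℝ, 0 ≤ t ∧ ∃ a ∈ A, y = t • a}) :
    ∃ α ∈ A, ∀ x ∈ A, 0 < ⟪α, x⟫ := by
  have hcomp : IsCompact A := (isCompact_sphere 0 1).of_isClosed_subset hcl hA
  obtain ⟨u, hu⟩ := exists_forall_inner_pos_of_zero_notMem_convexHull hcomp
    (zero_notMem_convexHull_of_convex_coneOver hA hanti hcone)
  obtain ⟨α, hα, hmax⟩ := hcomp.exists_isMaxOn hne
    (continuous_const.inner continuous_id : Continuous (⟪u, ·⟫)).continuousOn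
  exact ⟨α, hα, fun x hx => inner_pos_of_isMaxOn hA hcone hu hα hmax hx⟩
end
end

section
/- Let B = {x ∈ ℝ³ : ‖x‖ < 1} be the open unit ball and S² = {x ∈ ℝ³ : ‖x‖ = 1} the unit sphere. Let M ⊆ B be a convex set that is closed in B (i.e., closure(M) ∩ B = M) and has 0 in its interior. Let ∂M = frontier(M) ∩ B denote the relative boundary of M in B, and R(x) = x/‖x‖ the radial projection. Then closure(M) ∩ S² = S² ∖ R(∂M), i.e., a point of the unit sphere is a limit point of M if and only if it is not the radial projection of any relative boundary point of M. -/
noncomputable section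

local notation "E" => EuclideanSpace ℝ (Fin 3)

/-- for a convex set `M` in the open unit ball `B ⊆ ℝ³`, closed in
`B` and with `0` in its interior, the set of limit points of `M` on the unit
sphere is exactly the complement in the sphere of the radial projection of the
relative boundary of `M` in `B`. -/
theorem statement_15 (M : Set E) (hMB : M ⊆ Metric.ball (0 : E) 1)
    (hMconv : Convex ℝ M)
    (hMcl : closure M ∩ Metric.ball (0 : E) 1 = M)
    (h0 : 0 ∈ interior M) :
    closure M ∩ Metric.sphere (0 : E) 1 =
      Metric.sphere (0 : E) 1 \
        ((fun x => ‖x‖⁻¹ • x) '' (frontier M ∩ Metric.ball (0 : E) 1)) := by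
  ext u
  simp only [Set.mem_inter_iff, Set.mem_diff, Set.mem_image, mem_sphere_iff_norm, sub_zero,
    Metric.mem_ball, dist_zero_right]
  constructor
  · rintro ⟨huM, hu1⟩
    refine ⟨hu1, ?_⟩
    rintro ⟨x, ⟨hxf, hxB⟩, hxu⟩
    have hx0 : x ≠ 0 := by
      rintro rfl
      simp at hxu
      rw [← hxu] at hu1
      simp at hu1
    have hxn : 0 < ‖x‖ := norm_pos_iff.mpr hx0
    have hx : x = ‖x‖ • u := by
      rw [← hxu, smul_smul, mul_inv_cancel₀ hxn.ne', one_smul]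
    have hint : x ∈ interior M := by
      have h := hMconv.combo_interior_closure_mem_interior h0 huM
        (a := 1 - ‖x‖) (b := ‖x‖) (by linarith) hxn.le (by ring)
      rw [smul_zero, zero_add] at h
      rwa [hx]
    rw [← closure_diff_interior] at hxf
    exact hxf.2 hint
  · rintro ⟨hu1, hnot⟩
    refine ⟨?_, hu1⟩
    by_contra huM
    have hu0 : u ≠ 0 := by intro h; rw [h] at hu1; simp at hu1
    set T : Set ℝ := Set.Icc 0 1 ∩ (fun t : ℝ => t • u) ⁻¹' closure M with hTdef
    have hcont : Continuous fun t : ℝ => t • u := continuous_id.smul continuous_const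
    have hTclosed : IsClosed T := isClosed_Icc.inter (isClosed_closure.preimage hcont)
    have h0T : (0 : ℝ) ∈ T := by
      constructor
      · exact Set.mem_Icc.mpr ⟨le_refl 0, zero_le_one⟩
      · show (0 : ℝ) • u ∈ closure M
        rw [zero_smul]
        exact subset_closure (interior_subset h0)
    have hTbdd : BddAbove T := ⟨1, fun t ht => ht.1.2⟩
    set t₀ : ℝ := sSup T with ht₀def
    have ht₀T : t₀ ∈ T := hTclosed.csSup_mem ⟨0, h0T⟩ hTbdd
    have ht₀le : t₀ ≤ 1 := ht₀T.1.2
    have ht₀lt : t₀ < 1 := by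
      rcases lt_or_eq_of_le ht₀le with h | h
      · exact h
      · exfalso; apply huM
        have := ht₀T.2
        rw [h] at this
        simpa using this
    -- t₀ > 0
    obtain ⟨δ, hδ0, hδ⟩ := Metric.isOpen_iff.mp isOpen_interior 0 h0
    have hsmall : min (δ / 2) (1 / 2) ∈ T := by
      have hmpos : (0 : ℝ) < min (δ / 2) (1 / 2) := lt_min (by linarith) (by norm_num)
      constructor
      · exact Set.mem_Icc.mpr ⟨hmpos.le, by
          have : min (δ / 2) (1 / 2) ≤ 1 / 2 := min_le_right _ _
          linarith⟩
      · show min (δ / 2) (1 / 2) • u ∈ closure M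
        apply subset_closure
        apply interior_subset
        apply hδ
        rw [Metric.mem_ball, dist_zero_right, norm_smul, Real.norm_eq_abs,
          abs_of_pos hmpos, hu1, mul_one]
        calc min (δ / 2) (1 / 2) ≤ δ / 2 := min_le_left _ _
          _ < δ := by linarith
    have ht₀pos : 0 < t₀ :=
      lt_of_lt_of_le (lt_min (by linarith) (by norm_num)) (le_csSup hTbdd hsmall)
    set x : E := t₀ • u with hxdef
    have hxnorm : ‖x‖ = t₀ := by
      rw [hxdef, norm_smul, Real.norm_eq_abs, abs_of_pos ht₀pos, hu1, mul_one]
    have hxcl : x ∈ closure M := ht₀T.2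
    have hxM : x ∈ M := by
      rw [← hMcl]
      exact ⟨hxcl, by rw [Metric.mem_ball, dist_zero_right, hxnorm]; exact ht₀lt⟩
    have hxni : x ∉ interior M := by
      intro hxi
      obtain ⟨ε, hε0, hε⟩ := Metric.isOpen_iff.mp isOpen_interior x hxi
      obtain ⟨m, hm0, hmε, hmt⟩ : ∃ m : ℝ, 0 < m ∧ m < ε ∧ t₀ + m ≤ 1 := by
        refine ⟨min (ε / 2) ((1 - t₀) / 2), lt_min (by linarith) (by linarith), ?_, ?_⟩
        · calc min (ε / 2) ((1 - t₀) / 2) ≤ ε / 2 := min_le_left _ _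
            _ < ε := by linarith
        · have : min (ε / 2) ((1 - t₀) / 2) ≤ (1 - t₀) / 2 := min_le_right _ _
          linarith
      have ht₁T : t₀ + m ∈ T := by
        constructor
        · exact Set.mem_Icc.mpr ⟨by linarith, hmt⟩
        · show (t₀ + m) • u ∈ closure M
          apply subset_closure
          apply interior_subset
          apply hε
          rw [Metric.mem_ball, dist_eq_norm, hxdef, ← sub_smul, norm_smul, Real.norm_eq_abs,
            hu1, mul_one, add_sub_cancel_left, abs_of_pos hm0]
          exact hmε
      have : t₀ + m ≤ t₀ := le_csSup hTbdd ht₁T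
      linarith
    apply hnot
    refine ⟨x, ⟨⟨hxcl, hxni⟩, ?_⟩, ?_⟩
    · rw [hxnorm]; exact ht₀lt
    · rw [hxnorm, hxdef, smul_smul, inv_mul_cancel₀ ht₀pos.ne', one_smul]
end
end
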